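/- Let M_1, M_2, … be pairwise disjoint infinite subsets of the positive integers and let N be the associated special copy in B(ℓ²). Then N contains no nonzero compact operator, and the quotient map onto the Calkin algebra is isometric on N; that is, dist(A, K) = ‖A‖ for every A ∈ N, where K is the set of compact operators on ℓ². -/

import Mathlib

open scoped ENNReal

noncomputable section

/-- The complex Hilbert space `ℓ²` of square-summable sequences indexed by the
positive integers. -/
abbrev H2 : Type := lp (fun _ : ℕ+ => ℂ) 2

/-- The standard orthonormal basis vectors of `ℓ²`. -/
def e (i : ℕ+) : H2 := lp.single 2 i 1

/-- The `(i,j)` matrix entry `⟨A e_j, e_i⟩` of a bounded operator on `ℓ²`. -/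
def entry (A : H2 →L[ℂ] H2) (i j : ℕ+) : ℂ := inner ℂ (e i) (A (e j))

/-- The special copy of `B(ℓ²)` associated to pairwise disjoint infinite subsets
`M_j = {m^j_1 < m^j_2 < ⋯}`, given via their strictly increasing enumerations
`ee j k = m^j_k`. -/
def specialCopy (ee : ℕ → ℕ → ℕ+) : Set (H2 →L[ℂ] H2) :=
  {A | (∀ i j : ℕ+, (¬ ∃ r s k : ℕ, i = ee r k ∧ j = ee s k) → entry A i j = 0) ∧
       (∀ r s k k' : ℕ, entry A (ee r k) (ee s k) = entry A (ee r k') (ee s k'))}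

/-!
An operator `A` in the special copy kills the basis vectors outside `⋃ M_r` and maps each layer
`{m^r_k : r ≥ 1}` into itself by one and the same matrix, whatever `k` is. Approximate `‖A‖` by
`‖A x‖` for a vector `x` supported on finitely many layers of `⋃ M_r`. Moving `x` up by `n`
layers (`m^r_k ↦ m^r_{k+n}`) changes neither `‖x‖` nor `‖A x‖`, and two such shifts that are far
enough apart have disjoint supports, before and after applying `A`. A compact `S` cannot keep all
of these shifts apart, so testing `A - S` on the difference of two shifts that `S` nearly
identifies gives `‖A x‖ ≤ ‖A - S‖`. Hence `‖A‖ ≤ ‖A - S‖` for every compact `S`.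
-/

open Function

section lp

variable {α β E : Type*} [NormedAddCommGroup E] {p : ℝ≥0∞}

theorem lp.norm_eq_tsum_rpow_of_coe_eq_extend (hp : 0 < p.toReal) {g : α → β}
    (hg : Injective g) {d : α → E} {u : lp (fun _ : β => E) p} (hu : ⇑u = extend g d 0) :
    ‖u‖ = (∑' a, ‖d a‖ ^ p.toReal) ^ (1 / p.toReal) := by
  rw [lp.norm_eq_tsum_rpow hp, hu, ← hg.tsum_eq]
  · simp only [hg.extend_apply]
  · intro i hi
    have hne : extend g d 0 i ≠ 0 := fun h => by simp [h, Real.zero_rpow hp.ne'] at hi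
    obtain ⟨a, -, rfl⟩ := support_extend_zero_subset hne
    exact ⟨a, rfl⟩

theorem lp.norm_sub_rpow_eq_add_of_disjoint {G : β → Type*} [∀ i, NormedAddCommGroup (G i)]
    (hp : 0 < p.toReal) {u v : lp G p} (h : ∀ i, u i = 0 ∨ v i = 0) :
    ‖u - v‖ ^ p.toReal = ‖u‖ ^ p.toReal + ‖v‖ ^ p.toReal := by
  rw [lp.norm_rpow_eq_tsum hp, lp.norm_rpow_eq_tsum hp, lp.norm_rpow_eq_tsum hp,
    ← ((lp.memℓp u).summable hp).tsum_add ((lp.memℓp v).summable hp)]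
  refine tsum_congr fun i => ?_
  rcases h i with h | h <;> simp [h, Real.zero_rpow hp.ne']

theorem lp.coe_sum_single_eq_extend [DecidableEq α] [DecidableEq β] {g : α → β}
    (hg : Injective g) (s : Finset α) (c : α → E) :
    ⇑(∑ a ∈ s, lp.single p (g a) (c a)) = extend g (fun a => if a ∈ s then c a else 0) 0 := by
  funext i
  rw [lp.coeFn_sum, Finset.sum_apply]
  simp only [lp.single_apply, Pi.single_apply]
  by_cases hi : ∃ a, g a = i
  · obtain ⟨a, rfl⟩ := hi
    simp [hg.extend_apply, hg.eq_iff]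
  · rw [extend_apply' _ _ _ hi]
    exact Finset.sum_eq_zero fun a _ => if_neg fun h => hi ⟨a, h.symm⟩

theorem lp.exists_lt_norm_apply_sum_single {𝕜 F : Type*} [DenselyNormedField 𝕜]
    [NormedSpace 𝕜 E] [NormedAddCommGroup F] [NormedSpace 𝕜 F] [DecidableEq β] [Fact (1 ≤ p)]
    (hp : p ≠ ∞) (T : lp (fun _ : β => E) p →L[𝕜] F) {g : α → β} (hg : Injective g)
    (hT : ∀ j ∉ Set.range g, ∀ a, T (lp.single p j a) = 0) {r : ℝ} (hr : r < ‖T‖) :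
    ∃ (s : Finset α) (c : α → E),
      ‖(∑ a ∈ s, lp.single p (g a) (c a) : lp (fun _ : β => E) p)‖ < 1 ∧
      r < ‖T (∑ a ∈ s, lp.single p (g a) (c a))‖ := by
  classical
  have hp' : 0 < p.toReal :=
    ENNReal.toReal_pos (zero_lt_one.trans_le (Fact.out : 1 ≤ p)).ne' hp
  obtain ⟨y, hy, hTy⟩ := T.exists_lt_apply_of_lt_opNorm hr
  have hsum : Filter.Tendsto (fun t : Finset β => ∑ i ∈ t, lp.single p i (y i))
      Filter.atTop (nhds y) := lp.hasSum_single hp y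
  obtain ⟨t, ht, hTt⟩ := ((hsum.norm.eventually (gt_mem_nhds hy)).and
    ((T.continuous.tendsto y).comp hsum |>.norm.eventually (lt_mem_nhds hTy))).exists
  have hreindex : ∑ a ∈ t.preimage g hg.injOn, lp.single p (g a) (y (g a)) =
      ∑ i ∈ t with i ∈ Set.range g, lp.single p i (y i) :=
    Finset.sum_preimage' g t hg.injOn (fun i => lp.single p i (y i))
  refine ⟨t.preimage g hg.injOn, y ∘ g, ?_, ?_⟩
  · refine lt_of_le_of_lt ?_ ht
    simp only [comp_apply, hreindex]
    rw [← Real.rpow_le_rpow_iff (norm_nonneg _) (norm_nonneg _) hp', lp.norm_sum_single hp',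
      lp.norm_sum_single hp']
    exact Finset.sum_le_sum_of_subset_of_nonneg (Finset.filter_subset _ _) fun _ _ _ => by
      positivity
  · have hkill : T (∑ i ∈ t with i ∉ Set.range g, lp.single p i (y i)) = 0 := by
      rw [map_sum]
      exact Finset.sum_eq_zero fun i hi => hT i (Finset.mem_filter.1 hi).2 _
    simp only [comp_apply, hreindex]
    rwa [← add_zero (T _), ← hkill, ← map_add, Finset.sum_filter_add_sum_filter_not]

end lp

namespace IsCompactOperator

variable {𝕜 E F : Type*} [NontriviallyNormedField 𝕜] [NormedAddCommGroup E] [NormedSpace 𝕜 E]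
  [NormedAddCommGroup F] [NormedSpace 𝕜 F]

theorem exists_lt_dist_lt {S : E →L[𝕜] F} (hS : IsCompactOperator S) {u : ℕ → E} {R : ℝ}
    (hu : ∀ n, ‖u n‖ ≤ R) {η : ℝ} (hη : 0 < η) :
    ∃ m m', m < m' ∧ dist (S (u m)) (S (u m')) < η := by
  obtain ⟨a, -, φ, hφ, hlim⟩ :=
    (isCompact_closure_image_closedBall (f := (S : E →ₗ[𝕜] F)) hS R).tendsto_subseq
      fun n => subset_closure ⟨u n, mem_closedBall_zero_iff.2 (hu n), rfl⟩
  obtain ⟨N, hN⟩ := Metric.cauchySeq_iff.1 hlim.cauchySeq η hη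
  exact ⟨φ N, φ (N + 1), hφ N.lt_succ_self, hN N le_rfl (N + 1) N.le_succ⟩

theorem le_opNorm_sub {T S : E →L[𝕜] F} (hS : IsCompactOperator S) {u : ℕ → E} {R b c : ℝ}
    (hu : ∀ n, ‖u n‖ ≤ R) (hc : 0 < c)
    (hsep : ∀ m m', m < m' → ‖u m - u m'‖ ≤ c ∧ c * b ≤ ‖T (u m - u m')‖) :
    b ≤ ‖T - S‖ := by
  refine le_of_forall_pos_le_add fun η hη => le_of_mul_le_mul_left ?_ hc
  obtain ⟨m, m', hmm', hclose⟩ := hS.exists_lt_dist_lt hu (mul_pos hc hη)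
  obtain ⟨hw, hTw⟩ := hsep m m' hmm'
  calc c * b ≤ ‖T (u m - u m')‖ := hTw
    _ = ‖(T - S) (u m - u m') + S (u m - u m')‖ := by simp
    _ ≤ ‖T - S‖ * c + c * η := by
      refine (norm_add_le _ _).trans (add_le_add ((T - S).le_opNorm_of_le hw) ?_)
      rw [map_sub, ← dist_eq_norm]
      exact hclose.le
    _ = c * (‖T - S‖ + η) := by ring

end IsCompactOperator

theorem injective_uncurry_of_disjoint_range {β : Type*} {ee : ℕ → ℕ → β}
    (hinj : ∀ j, Injective (ee j))
    (hdisj : ∀ j j', j ≠ j' → Set.range (ee j) ∩ Set.range (ee j') = ∅) :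
    Injective (uncurry ee) := by
  rintro ⟨r, k⟩ ⟨r', k'⟩ h
  obtain rfl : r = r' := by
    by_contra hr
    have hmem : ee r k ∈ Set.range (ee r) ∩ Set.range (ee r') := ⟨⟨k, rfl⟩, ⟨k', h.symm⟩⟩
    rwa [hdisj r r' hr] at hmem
  exact Prod.ext rfl (hinj r h)

section shift

variable {β : Type*} {ee : ℕ → ℕ → β}

def shiftedIndex (ee : ℕ → ℕ → β) (n : ℕ) (q : ℕ × ℕ) : β := ee q.1 (q.2 + n)

theorem shiftedIndex_eq_shiftedIndex_iff (hinj : Injective (uncurry ee)) {n n' : ℕ}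
    {q q' : ℕ × ℕ} :
    shiftedIndex ee n q = shiftedIndex ee n' q' ↔ q.1 = q'.1 ∧ q.2 + n = q'.2 + n' :=
  (hinj.eq_iff (a := (q.1, q.2 + n)) (b := (q'.1, q'.2 + n'))).trans Prod.ext_iff

theorem injective_shiftedIndex (hinj : Injective (uncurry ee)) (n : ℕ) :
    Injective (shiftedIndex ee n) := fun q q' h => by
  obtain ⟨h₁, h₂⟩ := (shiftedIndex_eq_shiftedIndex_iff hinj).1 h
  exact Prod.ext h₁ (by omega)

variable {E : Type*} [NormedAddCommGroup E] {p : ℝ≥0∞}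
  {u : ℕ → lp (fun _ : β => E) p} {d : ℕ × ℕ → E}

theorem norm_eq_of_coe_eq_extend_shiftedIndex (hinj : Injective (uncurry ee))
    (hp : 0 < p.toReal) (hu : ∀ n, ⇑(u n) = extend (shiftedIndex ee n) d 0) (n : ℕ) :
    ‖u n‖ = ‖u 0‖ := by
  rw [lp.norm_eq_tsum_rpow_of_coe_eq_extend hp (injective_shiftedIndex hinj n) (hu n),
    lp.norm_eq_tsum_rpow_of_coe_eq_extend hp (injective_shiftedIndex hinj 0) (hu 0)]

theorem norm_sub_eq_of_coe_eq_extend_shiftedIndex [Fact (1 ≤ p)]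
    (hinj : Injective (uncurry ee)) (hp : 0 < p.toReal)
    (hu : ∀ n, ⇑(u n) = extend (shiftedIndex ee n) d 0) {K : ℕ}
    (hd : ∀ q, K < q.2 → d q = 0) {n n' : ℕ} (hnn' : n + K < n') :
    ‖u n - u n'‖ = 2 ^ (1 / p.toReal) * ‖u 0‖ := by
  have hsupp : ∀ m i, u m i ≠ 0 → ∃ q, q.2 ≤ K ∧ shiftedIndex ee m q = i := fun m i hi => by
    rw [hu m] at hi
    obtain ⟨q, hq, rfl⟩ := support_extend_zero_subset hi
    exact ⟨q, not_lt.1 (mt (hd q) hq), rfl⟩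
  have hdisj : ∀ i, u n i = 0 ∨ u n' i = 0 := fun i => by
    by_contra! hi
    obtain ⟨q, hq, rfl⟩ := hsupp n i hi.1
    obtain ⟨q', -, hqq'⟩ := hsupp n' _ hi.2
    have := ((shiftedIndex_eq_shiftedIndex_iff hinj).1 hqq').2
    omega
  have hpow := lp.norm_sub_rpow_eq_add_of_disjoint hp hdisj
  rw [norm_eq_of_coe_eq_extend_shiftedIndex hinj hp hu n,
    norm_eq_of_coe_eq_extend_shiftedIndex hinj hp hu n', ← two_mul] at hpow
  rw [← Real.rpow_rpow_inv (norm_nonneg (u n - u n')) hp.ne', hpow,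
    Real.mul_rpow zero_le_two (by positivity), Real.rpow_rpow_inv (norm_nonneg _) hp.ne', one_div]

end shift

theorem entry_eq_apply (A : H2 →L[ℂ] H2) (i j : ℕ+) : entry A i j = A (e j) i := by
  simp [entry, e, lp.inner_single_left, RCLike.inner_apply]

theorem lp_single_eq_smul_e (j : ℕ+) (a : ℂ) : lp.single 2 j a = a • e j := by
  rw [e, ← lp.single_smul, smul_eq_mul, mul_one]

namespace specialCopy

variable {ee : ℕ → ℕ → ℕ+} {A : H2 →L[ℂ] H2}

theorem apply_single_eq_zero (hA : A ∈ specialCopy ee) {j : ℕ+}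
    (hj : j ∉ Set.range (uncurry ee)) (a : ℂ) : A (lp.single 2 j a) = 0 := by
  have hcol : A (e j) = 0 := lp.ext <| funext fun i => by
    rw [← entry_eq_apply]
    exact hA.1 i j fun ⟨_, s, k, _, hjk⟩ => hj ⟨(s, k), hjk.symm⟩
  rw [lp_single_eq_smul_e, map_smul, hcol, smul_zero]

theorem entry_eq_zero_of_forall_ne (hinj : Injective (uncurry ee)) (hA : A ∈ specialCopy ee)
    {i : ℕ+} {s k : ℕ} (hi : ∀ r, i ≠ ee r k) : entry A i (ee s k) = 0 :=
  hA.1 _ _ fun ⟨r, s', k', hir, hjs⟩ => by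
    obtain ⟨-, rfl⟩ := Prod.mk.inj (hinj (a₁ := (s, k)) (a₂ := (s', k')) hjs)
    exact hi r hir

theorem entry_ee_ee (hinj : Injective (uncurry ee)) (hA : A ∈ specialCopy ee) (r s k k' : ℕ) :
    entry A (ee r k) (ee s k') = if k = k' then entry A (ee r 0) (ee s 0) else 0 := by
  split_ifs with hkk'
  · subst hkk'
    exact hA.2 r s k 0
  · refine hA.1 _ _ fun ⟨r', s', k'', hi, hj⟩ => hkk' ?_
    obtain ⟨-, rfl⟩ := Prod.mk.inj (hinj (a₁ := (r, k)) (a₂ := (r', k'')) hi)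
    obtain ⟨-, rfl⟩ := Prod.mk.inj (hinj (a₁ := (s, k')) (a₂ := (s', k)) hj)
    rfl

theorem coe_apply_sum_single (hinj : Injective (uncurry ee)) (hA : A ∈ specialCopy ee)
    (F : Finset (ℕ × ℕ)) (c : ℕ × ℕ → ℂ) (n : ℕ) :
    ⇑(A (∑ q ∈ F, lp.single 2 (shiftedIndex ee n q) (c q))) = extend (shiftedIndex ee n)
      (fun q => ∑ p ∈ F, if p.2 = q.2 then entry A (ee q.1 0) (ee p.1 0) * c p else 0) 0 := by
  funext i
  have hcoord : A (∑ q ∈ F, lp.single 2 (shiftedIndex ee n q) (c q)) i =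
      ∑ p ∈ F, entry A i (shiftedIndex ee n p) * c p := by
    rw [map_sum, lp.coeFn_sum, Finset.sum_apply]
    refine Finset.sum_congr rfl fun p _ => ?_
    rw [lp_single_eq_smul_e, map_smul, lp.coeFn_smul, Pi.smul_apply, smul_eq_mul,
      entry_eq_apply, mul_comm]
  rw [hcoord]
  by_cases hi : ∃ q, shiftedIndex ee n q = i
  · obtain ⟨q, rfl⟩ := hi
    rw [(injective_shiftedIndex hinj n).extend_apply]
    refine Finset.sum_congr rfl fun p _ => ?_
    rw [shiftedIndex, shiftedIndex, entry_ee_ee hinj hA]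
    by_cases hpq : p.2 = q.2
    · simp [hpq]
    · simp [hpq, Ne.symm hpq]
  · rw [extend_apply' _ _ _ hi]
    refine Finset.sum_eq_zero fun p _ => ?_
    rw [shiftedIndex, entry_eq_zero_of_forall_ne hinj hA (k := p.2 + n)
      fun r h => hi ⟨(r, p.2), h.symm⟩, zero_mul]

theorem norm_le_norm_sub (hinj : Injective (uncurry ee)) {S : H2 →L[ℂ] H2}
    (hA : A ∈ specialCopy ee) (hS : IsCompactOperator S) : ‖A‖ ≤ ‖A - S‖ := by
  have htwo : 0 < (2 : ℝ≥0∞).toReal := by norm_num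
  refine le_of_forall_pos_lt_add fun ε hε => ?_
  obtain ⟨F, c, hx, hAx⟩ := lp.exists_lt_norm_apply_sum_single ENNReal.ofNat_ne_top A hinj
    (fun _ hj a => apply_single_eq_zero hA hj a) (sub_lt_self ‖A‖ hε)
  set x : ℕ → H2 := fun n => ∑ q ∈ F, lp.single 2 (shiftedIndex ee n q) (c q)
  change ‖x 0‖ < 1 at hx
  change ‖A‖ - ε < ‖A (x 0)‖ at hAx
  set K := F.sup Prod.snd
  have hF : ∀ q ∈ F, q.2 ≤ K := fun q hq => Finset.le_sup (f := Prod.snd) hq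
  have hxd := fun n => lp.coe_sum_single_eq_extend (p := 2) (injective_shiftedIndex hinj n) F c
  have hxK : ∀ q : ℕ × ℕ, K < q.2 → (if q ∈ F then c q else 0) = 0 :=
    fun q hq => if_neg fun hqF => (hF q hqF).not_gt hq
  have hAxK : ∀ q : ℕ × ℕ, K < q.2 →
      (∑ p ∈ F, if p.2 = q.2 then entry A (ee q.1 0) (ee p.1 0) * c p else 0) = 0 :=
    fun q hq => Finset.sum_eq_zero fun p hpF =>
      if_neg fun hpq : p.2 = q.2 => (hF p hpF).not_gt (hpq ▸ hq)
  have hgap : ∀ m m', m < m' → m * (K + 1) + K < m' * (K + 1) := fun m m' h => by nlinarith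
  have hb : ‖A (x 0)‖ ≤ ‖A - S‖ := by
    refine hS.le_opNorm_sub (u := fun m => x (m * (K + 1))) (R := 1)
      (c := 2 ^ (1 / (2 : ℝ≥0∞).toReal)) (fun m => ?_) (by positivity)
      fun m m' hmm' => ⟨?_, ?_⟩
    · rw [norm_eq_of_coe_eq_extend_shiftedIndex hinj htwo hxd]
      exact hx.le
    · rw [norm_sub_eq_of_coe_eq_extend_shiftedIndex hinj htwo hxd hxK (hgap m m' hmm')]
      exact mul_le_of_le_one_right (by positivity) hx.le
    · rw [map_sub, norm_sub_eq_of_coe_eq_extend_shiftedIndex hinj htwo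
        (coe_apply_sum_single hinj hA F c) hAxK (hgap m m' hmm')]
  linarith

end specialCopy

/-- A special copy `N` in `B(ℓ²)` contains no nonzero compact operator, and the quotient
map onto the Calkin algebra is isometric on `N`: `dist(A, K) = ‖A‖` for every `A ∈ N`,
where `K` is the set of compact operators. -/
theorem stmt12 (ee : ℕ → ℕ → ℕ+) (hmono : ∀ j, StrictMono (ee j))
    (hdisj : ∀ j j', j ≠ j' → Set.range (ee j) ∩ Set.range (ee j') = ∅) :
    (∀ A ∈ specialCopy ee, IsCompactOperator ⇑A → A = 0) ∧
    (∀ A ∈ specialCopy ee,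
      Metric.infDist A {S : H2 →L[ℂ] H2 | IsCompactOperator ⇑S} = ‖A‖) := by
  have hinj := injective_uncurry_of_disjoint_range (fun j => (hmono j).injective) hdisj
  have hzero : (0 : H2 →L[ℂ] H2) ∈ {S : H2 →L[ℂ] H2 | IsCompactOperator ⇑S} :=
    isCompactOperator_zero
  refine ⟨fun A hA hAc => norm_eq_zero.1 (le_antisymm ?_ (norm_nonneg A)), fun A hA => ?_⟩
  · simpa using specialCopy.norm_le_norm_sub hinj hA hAc
  · refine le_antisymm (by simpa using Metric.infDist_le_dist_of_mem (x := A) hzero)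
      ((Metric.le_infDist ⟨0, hzero⟩).2 fun S hS => ?_)
    rw [dist_eq_norm]
    exact specialCopy.norm_le_norm_sub hinj hA hS
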